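/- If the positive embedding is unit norm (‖z⁺‖ = 1), every negative satisfies ⟨z_r⁻, z⁺⟩ ≤ 1, at least one negative satisfies the strict inequality ⟨z_r⁻, z⁺⟩ < 1, and the step size satisfies λ > 0, then one gradient step on the contrastive loss strictly increases the anchor–positive similarity: ⟨z_a', z⁺⟩ > ⟨z_a, z⁺⟩, where z_a' = z_a + λ Σ_{r=1}^R α_r (z⁺ − z_r⁻). -/

import Mathlib

open Real BigOperators RealInnerProductSpace

/-! Since `‖z⁺‖ = 1`, the step changes the anchor–positive similarity by
`λ ∑ r, α_r (1 - ⟨z_r⁻, z⁺⟩)`: the softmax weights are positive, so this is a sum of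
nonnegative terms of which at least one is positive. -/

section

variable {E ι : Type*} [NormedAddCommGroup E] [InnerProductSpace ℝ E]

lemma inner_sub_left_of_norm_eq_one {p : E} (hp : ‖p‖ = 1) (n : E) :
    ⟪p - n, p⟫ = 1 - ⟪n, p⟫ := by
  rw [inner_sub_left, real_inner_self_eq_norm_sq, hp, one_pow]

lemma inner_sum_smul_sub_pos [Fintype ι] {p : E} (hp : ‖p‖ = 1) {n : ι → E} {a : ι → ℝ}
    (ha : ∀ r, 0 < a r) (hle : ∀ r, ⟪n r, p⟫ ≤ 1) (hlt : ∃ r, ⟪n r, p⟫ < 1) :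
    0 < ⟪∑ r, a r • (p - n r), p⟫ := by
  simp only [sum_inner, real_inner_smul_left, inner_sub_left_of_norm_eq_one hp]
  obtain ⟨r₀, hr₀⟩ := hlt
  exact Finset.sum_pos' (fun r _ => mul_nonneg (ha r).le (sub_nonneg.2 (hle r)))
    ⟨r₀, Finset.mem_univ _, mul_pos (ha r₀) (sub_pos.2 hr₀)⟩

lemma inner_lt_inner_add_smul {x v p : E} {c : ℝ} (hc : 0 < c) (hv : 0 < ⟪v, p⟫) :
    ⟪x, p⟫ < ⟪x + c • v, p⟫ := by
  rw [inner_add_left, real_inner_smul_left]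
  linarith [mul_pos hc hv]

end

theorem gradient_step_increases_positive_similarity_general
    (D R : ℕ)
    (za zpos : EuclideanSpace ℝ (Fin D))
    (zneg : Fin R → EuclideanSpace ℝ (Fin D))
    (Z : ℝ) (hZ : Z = Real.exp ⟪za, zpos⟫ + ∑ r, Real.exp ⟪za, zneg r⟫)
    (α : Fin R → ℝ) (hα : ∀ r, α r = Real.exp ⟪za, zneg r⟫ / Z)
    (lam : ℝ) (hlam : 0 < lam)
    (za' : EuclideanSpace ℝ (Fin D))
    (hza' : za' = za + lam • ∑ r, α r • (zpos - zneg r))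
    (hpos : ‖zpos‖ = 1)
    (hle : ∀ r, ⟪zneg r, zpos⟫ ≤ 1)
    (hlt : ∃ r, ⟪zneg r, zpos⟫ < 1) :
    ⟪za, zpos⟫ < ⟪za', zpos⟫ := by
  have hα_pos : ∀ r, 0 < α r := fun r => by
    rw [hα, hZ]
    positivity
  rw [hza']
  exact inner_lt_inner_add_smul hlam (inner_sum_smul_sub_pos hpos hα_pos hle hlt)

/-- If the positive embedding has unit norm (`‖z⁺‖ = 1`),
every negative satisfies `⟨z_r⁻, z⁺⟩ ≤ 1`, at least one negative satisfies the
strict inequality `⟨z_r⁻, z⁺⟩ < 1`, and the step size satisfies `λ > 0`, then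
one gradient step on the contrastive loss strictly increases the
anchor–positive similarity: `⟨z_a', z⁺⟩ > ⟨z_a, z⁺⟩`, where
`z_a' = z_a + λ • ∑ r, α_r • (z⁺ - z_r⁻)` and `α_r = exp(⟨z_a, z_r⁻⟩)/Z` with
`Z = exp(⟨z_a, z⁺⟩) + ∑ r, exp(⟨z_a, z_r⁻⟩)`. -/
theorem gradient_step_increases_positive_similarity
    (D R : ℕ) (hR : 1 ≤ R)
    (za zpos : EuclideanSpace ℝ (Fin D))
    (zneg : Fin R → EuclideanSpace ℝ (Fin D))
    (Z : ℝ) (hZ : Z = Real.exp ⟪za, zpos⟫ + ∑ r, Real.exp ⟪za, zneg r⟫)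
    (α : Fin R → ℝ) (hα : ∀ r, α r = Real.exp ⟪za, zneg r⟫ / Z)
    (lam : ℝ) (hlam : 0 < lam)
    (za' : EuclideanSpace ℝ (Fin D))
    (hza' : za' = za + lam • ∑ r, α r • (zpos - zneg r))
    (hpos : ‖zpos‖ = 1)
    (hle : ∀ r, ⟪zneg r, zpos⟫ ≤ 1)
    (hlt : ∃ r, ⟪zneg r, zpos⟫ < 1) :
    ⟪za, zpos⟫ < ⟪za', zpos⟫ :=
  gradient_step_increases_positive_similarity_general D R za zpos zneg Z hZ α hα lam hlam za' hza'
    hpos hle hlt
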